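/- arXiv:2301.09176 — 2 statements merged into one kernel-verified Lean document; each statement's English description precedes it below -/
import Mathlib

section
/- For every odd natural number k, the set S = {(α, y, z) ∈ ℤ_[2]³ : y is a unit, and there exists a unit u ∈ ℤ_[2] with α² + 4yz = 2^k·u} satisfies: μ³(S) = 2^{-(k+1)} if k ≥ 3, and μ³(S) = 0 if k = 1. (Equivalently, conditioned on y being a unit, the probability that v₂(α²+4yz) = k — i.e. that sqf(α²+4yz) ≡ 2 (mod 4) with v₂(α²+4yz) = k — is 2^{-k} for odd k ≥ 3 and 0 for k = 1; this is Theorem 6.2, part (3).) -/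
open MeasureTheory
open scoped ENNReal

noncomputable instance : MeasurableSpace ℤ_[2] := borel ℤ_[2]
instance : BorelSpace ℤ_[2] := ⟨rfl⟩

/-!
If `y` is a unit, `α² + 4yz` can have odd valuation only when `α = 2β` is even, and then
`α² + 4yz = 4 (β² + yz)`; so valuation `1` never occurs and valuation `k = m + 2` means
`v₂(β² + yz) = m`. For a unit `y`, the `z` with `2^n ∣ β² + yz` form a coset of `2^n ℤ₂`, of
Haar measure `2^{-n}`; hence the `z`-slice has measure `2^{-m} - 2^{-(m+1)} = 2^{-(m+1)}`.
Integrating over the even `α` (mass `1/2`) and the unit `y` (mass `1/2`) gives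
`2^{-(m+3)} = 2^{-(k+1)}`.
-/

namespace PadicInt

variable {p : ℕ} [Fact p.Prime]

theorem isUnit_iff_not_dvd {x : ℤ_[p]} : IsUnit x ↔ ¬ (p : ℤ_[p]) ∣ x := by
  rw [← norm_lt_one_iff_dvd, ← not_isUnit_iff, not_not]

theorem setOf_isUnit_eq_compl : {x : ℤ_[p] | IsUnit x} = {x | (p : ℤ_[p]) ∣ x}ᶜ := by
  ext x
  simp [isUnit_iff_not_dvd]

theorem exists_isUnit_eq_pow_mul_iff {x : ℤ_[p]} {n : ℕ} :
    (∃ u, IsUnit u ∧ x = (p : ℤ_[p]) ^ n * u) ↔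
      (p : ℤ_[p]) ^ n ∣ x ∧ ¬ (p : ℤ_[p]) ^ (n + 1) ∣ x := by
  have hpn : (p : ℤ_[p]) ^ n ≠ 0 := pow_ne_zero n prime_p.ne_zero
  constructor
  · rintro ⟨u, hu, rfl⟩
    rw [pow_succ, mul_dvd_mul_iff_left hpn]
    exact ⟨dvd_mul_right _ _, isUnit_iff_not_dvd.1 hu⟩
  · rintro ⟨⟨u, rfl⟩, h⟩
    rw [pow_succ, mul_dvd_mul_iff_left hpn] at h
    exact ⟨u, isUnit_iff_not_dvd.2 h, rfl⟩

theorem pow_dvd_iff_norm_le {x : ℤ_[p]} {n : ℕ} :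
    (p : ℤ_[p]) ^ n ∣ x ↔ ‖x‖ ≤ (p : ℝ) ^ (-n : ℤ) := by
  rw [norm_le_pow_iff_mem_span_pow, Ideal.mem_span_singleton]

theorem setOf_pow_dvd_add_mul {y : ℤ_[p]} (hy : IsUnit y) (c : ℤ_[p]) (n : ℕ) :
    {z | (p : ℤ_[p]) ^ n ∣ c + y * z} =
      (fun z ↦ ↑hy.unit⁻¹ * c + z) ⁻¹' {x | (p : ℤ_[p]) ^ n ∣ x} := by
  ext z
  have hfac : c + y * z = y * (↑hy.unit⁻¹ * c + z) := by
    rw [mul_add, ← mul_assoc, hy.mul_val_inv, one_mul]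
  simp only [Set.mem_ofPred_eq, Set.mem_preimage, hfac, hy.dvd_mul_left]

variable [MeasurableSpace ℤ_[p]] [BorelSpace ℤ_[p]]

theorem measurableSet_pow_dvd (n : ℕ) : MeasurableSet {x : ℤ_[p] | (p : ℤ_[p]) ^ n ∣ x} := by
  simp_rw [pow_dvd_iff_norm_le]
  exact measurableSet_le continuous_norm.measurable measurable_const

theorem measurableSet_dvd : MeasurableSet {x : ℤ_[p] | (p : ℤ_[p]) ∣ x} := by
  simpa using measurableSet_pow_dvd (p := p) 1

theorem measurableSet_isUnit : MeasurableSet {x : ℤ_[p] | IsUnit x} := by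
  rw [setOf_isUnit_eq_compl]
  exact measurableSet_dvd.compl

variable (μ : Measure ℤ_[p]) [μ.IsAddLeftInvariant] [IsProbabilityMeasure μ]

/-- `p ^ n ℤ_[p]` is the kernel of `ℤ_[p] → ZMod (p ^ n)`, hence an additive subgroup of
index `p ^ n`, whose `p ^ n` cosets share the total mass. -/
theorem measure_pow_dvd (n : ℕ) : μ {x | (p : ℤ_[p]) ^ n ∣ x} = ((p : ℝ≥0∞) ^ n)⁻¹ := by
  set H := (toZModPow (p := p) n).toAddMonoidHom.ker
  have hH : (H : Set ℤ_[p]) = {x | (p : ℤ_[p]) ^ n ∣ x} := by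
    ext x
    rw [SetLike.mem_coe, AddMonoidHom.mem_ker, Set.mem_ofPred_eq, ← Ideal.mem_span_singleton,
      ← ker_toZModPow]
    rfl
  have hindex : H.index = p ^ n := by
    rw [AddSubgroup.index_ker, AddMonoidHom.range_eq_top.2 (ZMod.ringHom_surjective _),
      AddSubgroup.card_top, Nat.card_zmod]
  have : H.FiniteIndex := ⟨by rw [hindex]; exact pow_ne_zero n (Fact.out : p.Prime).ne_zero⟩
  have hmass := H.index_mul_measure (hH ▸ measurableSet_pow_dvd n) μ
  rw [hindex, hH, measure_univ, mul_comm] at hmass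
  exact ENNReal.eq_inv_of_mul_eq_one_left (by exact_mod_cast hmass)

theorem measure_dvd : μ {x | (p : ℤ_[p]) ∣ x} = (p : ℝ≥0∞)⁻¹ := by
  simpa using measure_pow_dvd μ 1

theorem measure_isUnit : μ {x | IsUnit x} = 1 - (p : ℝ≥0∞)⁻¹ := by
  rw [setOf_isUnit_eq_compl, measure_compl measurableSet_dvd (measure_ne_top μ _), measure_univ,
    measure_dvd]

theorem measure_pow_dvd_add_mul {y : ℤ_[p]} (hy : IsUnit y) (c : ℤ_[p]) (n : ℕ) :
    μ {z | (p : ℤ_[p]) ^ n ∣ c + y * z} = ((p : ℝ≥0∞) ^ n)⁻¹ := by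
  rw [setOf_pow_dvd_add_mul hy, measure_preimage_add, measure_pow_dvd]

theorem measure_pow_dvd_not_dvd_add_mul {y : ℤ_[p]} (hy : IsUnit y) (c : ℤ_[p]) (n : ℕ) :
    μ {z | (p : ℤ_[p]) ^ n ∣ c + y * z ∧ ¬ (p : ℤ_[p]) ^ (n + 1) ∣ c + y * z} =
      ((p : ℝ≥0∞) ^ n)⁻¹ - ((p : ℝ≥0∞) ^ (n + 1))⁻¹ := by
  have hsub : {z | (p : ℤ_[p]) ^ (n + 1) ∣ c + y * z} ⊆ {z | (p : ℤ_[p]) ^ n ∣ c + y * z} :=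
    fun z hz ↦ (pow_dvd_pow _ n.le_succ).trans hz
  have hmeas : MeasurableSet {z | (p : ℤ_[p]) ^ (n + 1) ∣ c + y * z} := by
    rw [setOf_pow_dvd_add_mul hy]
    exact measurableSet_pow_dvd _ |>.preimage (measurable_const_add _)
  rw [← measure_pow_dvd_add_mul μ hy c, ← measure_pow_dvd_add_mul μ hy c,
    ← measure_sdiff hsub hmeas.nullMeasurableSet (measure_ne_top μ _)]
  rfl

end PadicInt

open PadicInt

theorem inv_two_pow_sub_inv_two_pow_succ (n : ℕ) :
    ((2 : ℝ≥0∞) ^ n)⁻¹ - ((2 : ℝ≥0∞) ^ (n + 1))⁻¹ = ((2 : ℝ≥0∞) ^ (n + 1))⁻¹ := by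
  rw [ENNReal.inv_pow, ENNReal.inv_pow, pow_succ]
  refine ENNReal.sub_eq_of_eq_add (by finiteness) ?_
  rw [← mul_add, ENNReal.inv_two_add_inv_two, mul_one]

def discriminantSet (k : ℕ) : Set (ℤ_[2] × ℤ_[2] × ℤ_[2]) :=
  {q | IsUnit q.2.1 ∧ ∃ u : ℤ_[2], IsUnit u ∧ q.1 ^ 2 + 4 * q.2.1 * q.2.2 = 2 ^ k * u}

theorem discriminantSet_eq (k : ℕ) :
    discriminantSet k = {q | IsUnit q.2.1 ∧ (2 : ℤ_[2]) ^ k ∣ q.1 ^ 2 + 4 * q.2.1 * q.2.2 ∧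
      ¬ (2 : ℤ_[2]) ^ (k + 1) ∣ q.1 ^ 2 + 4 * q.2.1 * q.2.2} := by
  ext q
  refine and_congr_right fun _ ↦ ?_
  simpa using exists_isUnit_eq_pow_mul_iff (p := 2) (x := q.1 ^ 2 + 4 * q.2.1 * q.2.2) (n := k)

theorem measurableSet_discriminantSet (k : ℕ) : MeasurableSet (discriminantSet k) := by
  have hf : Measurable fun q : ℤ_[2] × ℤ_[2] × ℤ_[2] ↦ q.1 ^ 2 + 4 * q.2.1 * q.2.2 :=
    Continuous.measurable (by fun_prop)
  have hdvd (n : ℕ) : MeasurableSet {x : ℤ_[2] | 2 ^ n ∣ x} := by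
    simpa using measurableSet_pow_dvd (p := 2) n
  rw [discriminantSet_eq]
  exact (measurableSet_isUnit.preimage (measurable_fst.comp measurable_snd)).inter
    ((hdvd k).preimage hf |>.inter ((hdvd (k + 1)).preimage hf).compl)

theorem two_dvd_of_two_dvd_sq_add_four_mul {α y z : ℤ_[2]} (h : 2 ∣ α ^ 2 + 4 * y * z) :
    2 ∣ α := by
  have hprime : Prime (2 : ℤ_[2]) := by simpa using prime_p (p := 2)
  refine hprime.dvd_of_dvd_pow (n := 2) ((dvd_add_left ?_).1 h)
  exact ⟨2 * y * z, by ring⟩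

theorem discriminantSet_one : discriminantSet 1 = ∅ := by
  rw [discriminantSet_eq, Set.eq_empty_iff_forall_notMem]
  rintro ⟨α, y, z⟩ ⟨-, h2, h4⟩
  obtain ⟨β, rfl⟩ := two_dvd_of_two_dvd_sq_add_four_mul (pow_one (2 : ℤ_[2]) ▸ h2)
  exact h4 ⟨β ^ 2 + y * z, by ring⟩

section

variable (μ : Measure ℤ_[2]) [μ.IsAddLeftInvariant] [IsProbabilityMeasure μ]

theorem measure_discriminantSet_slice (m : ℕ) (α y : ℤ_[2]) :
    μ {z | (α, y, z) ∈ discriminantSet (m + 2)} =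
      ({α : ℤ_[2] | 2 ∣ α} ×ˢ {y : ℤ_[2] | IsUnit y}).indicator
        (fun _ ↦ ((2 : ℝ≥0∞) ^ (m + 1))⁻¹) (α, y) := by
  simp only [discriminantSet_eq, Set.mem_ofPred_eq]
  by_cases hy : IsUnit y
  swap
  · simp [hy]
  by_cases hα : 2 ∣ α
  swap
  · have hempty : {z | IsUnit y ∧ (2 : ℤ_[2]) ^ (m + 2) ∣ α ^ 2 + 4 * y * z ∧
        ¬ (2 : ℤ_[2]) ^ (m + 2 + 1) ∣ α ^ 2 + 4 * y * z} = ∅ :=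
      Set.eq_empty_of_forall_notMem fun z ⟨_, h, _⟩ ↦
        hα (two_dvd_of_two_dvd_sq_add_four_mul ((dvd_pow_self 2 (by omega)).trans h))
    simp [hempty, hα]
  obtain ⟨β, rfl⟩ := hα
  have hfac (z : ℤ_[2]) : (2 * β) ^ 2 + 4 * y * z = 2 ^ 2 * (β ^ 2 + y * z) := by ring
  have h4 : (2 : ℤ_[2]) ^ 2 ≠ 0 := by norm_num
  simp only [hfac, add_comm m 2, add_assoc, pow_add (2 : ℤ_[2]) 2, mul_dvd_mul_iff_left h4, hy,
    true_and]
  simpa [hy, inv_two_pow_sub_inv_two_pow_succ] using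
    measure_pow_dvd_not_dvd_add_mul (p := 2) μ hy (β ^ 2) m

theorem measure_discriminantSet (m : ℕ) :
    (μ.prod (μ.prod μ)) (discriminantSet (m + 2)) = ((2 : ℝ≥0∞) ^ (m + 3))⁻¹ := by
  have hevens : MeasurableSet {α : ℤ_[2] | 2 ∣ α} := by simpa using measurableSet_dvd (p := 2)
  have hμevens : μ {α : ℤ_[2] | 2 ∣ α} = 2⁻¹ := by simpa using measure_dvd (p := 2) μ
  have hS := measurableSet_discriminantSet (m + 2)
  rw [← Measure.prodAssoc_prod, MeasurableEquiv.map_apply,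
    Measure.prod_apply (hS.preimage MeasurableEquiv.prodAssoc.measurable)]
  refine (lintegral_congr fun q : ℤ_[2] × ℤ_[2] ↦
    measure_discriminantSet_slice μ m q.1 q.2).trans ?_
  rw [lintegral_indicator_const (hevens.prod measurableSet_isUnit), Measure.prod_prod,
    measure_isUnit, hμevens, Nat.cast_ofNat, ENNReal.one_sub_inv_two, ENNReal.inv_pow,
    ENNReal.inv_pow]
  ring

end

/-- Theorem 6.2, part (3): for the Haar probability measure `μ` on `ℤ_[2]` and odd `k`, the
set of triples `(α, y, z)` with `y` a unit and `v₂(α² + 4yz) = k` (equivalently, the squarefree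
part of `α² + 4yz` is `≡ 2 (mod 4)` and the valuation is `k`) has `μ³`-measure `2^{-(k+1)}`
when `k ≥ 3`, and `0` when `k = 1`. -/
theorem stmt2 (k : ℕ) (hk : Odd k)
    (μ : Measure ℤ_[2]) [μ.IsAddHaarMeasure] [IsProbabilityMeasure μ] :
    (μ.prod (μ.prod μ)) {p : ℤ_[2] × ℤ_[2] × ℤ_[2] |
        IsUnit p.2.1 ∧ ∃ u : ℤ_[2], IsUnit u ∧
          p.1 ^ 2 + 4 * p.2.1 * p.2.2 = 2 ^ k * u}
      = if 3 ≤ k then ((2 : ℝ≥0∞) ^ (k + 1))⁻¹ else 0 := by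
  change (μ.prod (μ.prod μ)) (discriminantSet k) = _
  obtain ⟨j, rfl⟩ := hk
  rcases j with _ | j
  · simp [discriminantSet_one]
  · rw [if_pos (by omega), show 2 * (j + 1) + 1 = 2 * j + 1 + 2 by ring,
      measure_discriminantSet]
end

section
/- Let m ≥ 2 be an integer and A a 2×2 matrix over the 2-adic integers ℤ_[2] such that: (i) every entry of A − I is divisible by 2; (ii) for every vector v ∈ (ℤ/4ℤ)² of additive order 4, Ā·v ≠ v, where Ā is the entrywise reduction of A modulo 4; and (iii) every entry of A² − I is divisible by 2^{m+1}. Then every entry of A + I is divisible by 2^m, i.e. A = −I + 2^m·M for some 2×2 matrix M over ℤ_[2]. If, moreover, (iv) some entry of A² − I is not divisible by 2^{m+2}, then some entry of A + I is not divisible by 2^{m+1}, i.e. M ≢ 0 (mod 2). -/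
/-!
Write `A = 1 + 2B`. If `B` were singular modulo `2`, a kernel vector of `B mod 2`, lifted to
`(ℤ/4)²`, would have order `4` and be fixed by `A mod 4`, because `Av = v + 2Bv`. So `B` is
invertible, and `A² - 1 = (A - 1)(A + 1) = 2B(A + 1)` shows that `2^(k+1)` divides `A² - 1`
entrywise exactly when `2^k` divides `A + 1`; both claims are instances of this equivalence.
-/

open Matrix

namespace Matrix

variable {l m n R : Type*}

theorem forall_dvd_iff_exists_eq_smul [Monoid R] (c : R) (M : Matrix m n R) :
    (∀ i j, c ∣ M i j) ↔ ∃ N : Matrix m n R, M = c • N := by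
  refine ⟨fun h => ?_, ?_⟩
  · choose N hN using h
    exact ⟨of N, by ext i j; exact hN i j⟩
  · rintro ⟨N, rfl⟩ i j
    exact dvd_mul_right c (N i j)

variable [Fintype m] [CommRing R]

theorem dvd_mul_apply_of_forall_dvd {d : R} (L : Matrix l m R) {N : Matrix m n R}
    (h : ∀ i j, d ∣ N i j) (i : l) (j : n) : d ∣ (L * N) i j :=
  Finset.dvd_sum fun k _ => dvd_mul_of_dvd_right (h k j) _

theorem forall_dvd_mul_iff_of_isUnit_det [DecidableEq m] {B : Matrix m m R} (hB : IsUnit B.det)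
    (d : R) (M : Matrix m n R) : (∀ i j, d ∣ (B * M) i j) ↔ ∀ i j, d ∣ M i j := by
  refine ⟨fun h i j => ?_, dvd_mul_apply_of_forall_dvd B⟩
  simpa [← Matrix.mul_assoc, nonsing_inv_mul B hB] using dvd_mul_apply_of_forall_dvd B⁻¹ h i j

theorem forall_pow_succ_dvd_sq_sub_one_iff [DecidableEq m] [IsDomain R] {A B : Matrix m m R}
    {c : R} (hc : c ≠ 0) (hAB : A - 1 = c • B) (hB : IsUnit B.det) (k : ℕ) :
    (∀ i j, c ^ (k + 1) ∣ (A ^ 2 - 1 : Matrix m m R) i j) ↔ ∀ i j, c ^ k ∣ (A + 1) i j := by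
  have hsq : A ^ 2 - 1 = c • (B * (A + 1)) := by
    rw [← smul_mul, ← hAB]
    noncomm_ring
  simp only [hsq, smul_apply, smul_eq_mul, pow_succ' c, mul_dvd_mul_iff_left hc]
  exact forall_dvd_mul_iff_of_isUnit_det hB _ _

end Matrix

namespace PadicInt

variable {p : ℕ} [Fact p.Prime] {n : Type*}

theorem toZModPow_eq_zero_iff {k : ℕ} {x : ℤ_[p]} : toZModPow k x = 0 ↔ (p : ℤ_[p]) ^ k ∣ x := by
  rw [← RingHom.mem_ker, ker_toZModPow, Ideal.mem_span_singleton]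

theorem toZMod_eq_zero_iff {x : ℤ_[p]} : toZMod x = 0 ↔ (p : ℤ_[p]) ∣ x := by
  rw [← RingHom.mem_ker, ker_toZMod, maximalIdeal_eq_span_p, Ideal.mem_span_singleton]

theorem addOrderOf_toZModPow_comp {u : n → ℤ_[p]} (hu : ∃ i, ¬(p : ℤ_[p]) ∣ u i) (k : ℕ) :
    addOrderOf (toZModPow (k + 1) ∘ u) = p ^ (k + 1) := by
  refine addOrderOf_eq_prime_pow ?_ ?_
  · obtain ⟨i, hi⟩ := hu
    intro h
    have hdvd : (p : ℤ_[p]) ^ (k + 1) ∣ p ^ k * u i := by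
      rw [← toZModPow_eq_zero_iff, map_mul, map_pow, map_natCast, ← Nat.cast_pow, ← nsmul_eq_mul]
      exact congrFun h i
    have hp : (p : ℤ_[p]) ≠ 0 := Nat.cast_ne_zero.2 (Fact.out : p.Prime).ne_zero
    rw [pow_succ, mul_dvd_mul_iff_left (pow_ne_zero k hp)] at hdvd
    exact hi hdvd
  · funext i
    simp

variable [Fintype n] [DecidableEq n]

theorem exists_mulVec_dvd_of_not_isUnit_det {B : Matrix n n ℤ_[p]} (hB : ¬IsUnit B.det) :
    ∃ u : n → ℤ_[p], (∃ i, ¬(p : ℤ_[p]) ∣ u i) ∧ ∀ i, (p : ℤ_[p]) ∣ (B *ᵥ u) i := by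
  have hdet : (B.map toZMod).det = 0 := by
    rw [show B.map toZMod = toZMod.mapMatrix B from rfl, ← RingHom.map_det, ← RingHom.mem_ker,
      ker_toZMod]
    exact (IsLocalRing.mem_maximalIdeal _).2 hB
  obtain ⟨w, hw0, hw⟩ := exists_mulVec_eq_zero_iff.2 hdet
  choose u hu using fun i => ZMod.ringHom_surjective toZMod (w i)
  refine ⟨u, ?_, fun i => ?_⟩
  · by_contra! h
    exact hw0 (funext fun i => by rw [← hu i, Pi.zero_apply, toZMod_eq_zero_iff]; exact h i)
  · rw [← toZMod_eq_zero_iff, RingHom.map_mulVec, Function.comp_def]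
    simp [hu, hw]

theorem map_toZModPow_mulVec_comp {k : ℕ} {A : Matrix n n ℤ_[p]} {u : n → ℤ_[p]}
    (h : ∀ i, (p : ℤ_[p]) ^ k ∣ ((A - 1) *ᵥ u) i) :
    A.map (toZModPow k) *ᵥ (toZModPow k ∘ u) = toZModPow k ∘ u := by
  funext i
  have hAu : A *ᵥ u = u + (A - 1) *ᵥ u := by rw [sub_mulVec, one_mulVec, add_sub_cancel]
  rw [← RingHom.map_mulVec, hAu, Pi.add_apply, map_add, toZModPow_eq_zero_iff.2 (h i), add_zero,
    Function.comp_apply]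

theorem isUnit_det_of_forall_mulVec_ne {A B : Matrix n n ℤ_[p]}
    (hAB : A - 1 = (p : ℤ_[p]) • B)
    (h : ∀ v : n → ZMod (p ^ 2), addOrderOf v = p ^ 2 → A.map (toZModPow 2) *ᵥ v ≠ v) :
    IsUnit B.det := by
  by_contra hB
  obtain ⟨u, hu, hBu⟩ := exists_mulVec_dvd_of_not_isUnit_det hB
  refine h _ (addOrderOf_toZModPow_comp hu 1) (map_toZModPow_mulVec_comp fun i => ?_)
  rw [hAB, smul_mulVec, Pi.smul_apply, smul_eq_mul, sq]
  exact mul_dvd_mul_left _ (hBu i)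

end PadicInt

theorem stmt8_general (m : ℕ) (A : Matrix (Fin 2) (Fin 2) ℤ_[2])
    (h1 : ∀ i j, (2 : ℤ_[2]) ∣ (A - 1) i j)
    (h2 : ∀ v : Fin 2 → ZMod 4, addOrderOf v = 4 →
      (A.map (PadicInt.toZModPow 2)).mulVec v ≠ v)
    (h3 : ∀ i j, (2 : ℤ_[2]) ^ (m + 1) ∣ ((A ^ 2 - 1 : Matrix (Fin 2) (Fin 2) ℤ_[2]) i j)) :
    (∀ i j, (2 : ℤ_[2]) ^ m ∣ (A + 1) i j) ∧
    ((∃ i j, ¬ (2 : ℤ_[2]) ^ (m + 2) ∣ ((A ^ 2 - 1 : Matrix (Fin 2) (Fin 2) ℤ_[2]) i j)) →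
      ∃ i j, ¬ (2 : ℤ_[2]) ^ (m + 1) ∣ (A + 1) i j) := by
  obtain ⟨B, hAB⟩ := (forall_dvd_iff_exists_eq_smul _ _).1 h1
  have hB : IsUnit B.det :=
    PadicInt.isUnit_det_of_forall_mulVec_ne (p := 2) (by exact_mod_cast hAB) h2
  have key := forall_pow_succ_dvd_sq_sub_one_iff two_ne_zero hAB hB
  refine ⟨(key m).1 h3, fun ⟨i, j, hij⟩ => ?_⟩
  by_contra! h
  exact hij ((key (m + 1)).2 h i j)

/-- The matrix computation underlying Proposition 5.5: let `m ≥ 2` and let `A` be a `2×2`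
matrix over `ℤ_[2]` such that (i) `A ≡ I (mod 2)` entrywise, (ii) the reduction of `A`
modulo `4` fixes no vector of additive order `4` in `(ℤ/4ℤ)²`, and (iii) `A² ≡ I (mod 2^{m+1})`
entrywise.  Then `A ≡ −I (mod 2^m)` entrywise, and if moreover (iv) `A² ≢ I (mod 2^{m+2})`,
then `A ≢ −I (mod 2^{m+1})`, i.e. `A = −I + 2^m·M` with `M ≢ 0 (mod 2)`. -/
theorem stmt8 (m : ℕ) (hm : 2 ≤ m) (A : Matrix (Fin 2) (Fin 2) ℤ_[2])
    (h1 : ∀ i j, (2 : ℤ_[2]) ∣ (A - 1) i j)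
    (h2 : ∀ v : Fin 2 → ZMod 4, addOrderOf v = 4 →
      (A.map (PadicInt.toZModPow 2)).mulVec v ≠ v)
    (h3 : ∀ i j, (2 : ℤ_[2]) ^ (m + 1) ∣ ((A ^ 2 - 1 : Matrix (Fin 2) (Fin 2) ℤ_[2]) i j)) :
    (∀ i j, (2 : ℤ_[2]) ^ m ∣ (A + 1) i j) ∧
    ((∃ i j, ¬ (2 : ℤ_[2]) ^ (m + 2) ∣ ((A ^ 2 - 1 : Matrix (Fin 2) (Fin 2) ℤ_[2]) i j)) →
      ∃ i j, ¬ (2 : ℤ_[2]) ^ (m + 1) ∣ (A + 1) i j) :=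
  stmt8_general m A h1 h2 h3
end
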